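/- Let ℓ, m be integers with 1 ≤ ℓ < m, and let t_{ℓ,m} : ℕ → ℕ be the (ℓ,m)-Thue–Morse word, defined by t_{ℓ,m}(n) = v(t₃(n)) where t₃(n) = (sum of the base-3 digits of n) mod 3 and v(0) = 0, v(1) = ℓ, v(2) = m. If m ≠ 2ℓ, then the additive complexity equals the abelian complexity: ρ⁺_{t_{ℓ,m}}(n) = ρ^{ab}_{t_{ℓ,m}}(n) for all n. If m = 2ℓ, then the additive complexity is the periodic word 1 3 5 5 5 ⋯, i.e., ρ⁺_{t_{ℓ,m}}(0) = 1, ρ⁺_{t_{ℓ,m}}(1) = 3, and ρ⁺_{t_{ℓ,m}}(n) = 5 for all n ≥ 2. -/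

import Mathlib

/-- Sum of the letters of the length-`n` factor of `x` starting at position `i`. -/
def blockSum (x : ℕ → ℕ) (i n : ℕ) : ℕ := ∑ j ∈ Finset.range n, x (i + j)

/-- Additive complexity: the number of distinct letter-sums of length-`n` factors. -/
noncomputable def addComplexity (x : ℕ → ℕ) (n : ℕ) : ℕ :=
  Set.ncard {s : ℕ | ∃ i : ℕ, blockSum x i n = s}

/-- Parikh vector of the length-`n` factor of `x` starting at position `i`. -/
def parikh (x : ℕ → ℕ) (i n : ℕ) : ℕ → ℕ :=
  fun a => ((Finset.range n).filter fun j => x (i + j) = a).card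

/-- Abelian complexity: the number of distinct Parikh vectors of length-`n` factors. -/
noncomputable def abComplexity (x : ℕ → ℕ) (n : ℕ) : ℕ :=
  Set.ncard {P : ℕ → ℕ | ∃ i : ℕ, parikh x i n = P}

/-- `x` is the fixed point of the morphism `f` starting with the letter `a₀`:
`x 0 = a₀` and `x` is the infinite concatenation `f (x 0) f (x 1) f (x 2) ⋯`. -/
def IsFixedPointOf (f : ℕ → List ℕ) (a₀ : ℕ) (x : ℕ → ℕ) : Prop :=
  x 0 = a₀ ∧ ∀ n j, j < (f (x n)).length →
    x ((∑ k ∈ Finset.range n, (f (x k)).length) + j) = (f (x n)).getD j 0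

/-- The ternary Thue–Morse word: the base-3 digit sum, reduced mod 3. -/
def t3 (n : ℕ) : ℕ := (Nat.digits 3 n).sum % 3

/-- The (ℓ,m)-Thue–Morse word: the ternary Thue–Morse word with letters 1, 2 renamed
to ℓ, m respectively. -/
def tlm (l m : ℕ) (n : ℕ) : ℕ :=
  if t3 n = 0 then 0 else if t3 n = 1 then l else m

/-!
Since `t3 (3k + r) = t3 k + r mod 3`, every aligned block `3k, 3k+1, 3k+2` of the ternary
Thue–Morse word is a permutation of `0 1 2`. Hence prefixes of length `N` contain each letter
`⌊N/3⌋` or `⌈N/3⌉` times and have letter sum within `1` of `N`: factors of equal length have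
letter counts differing by at most `2`, and a factor of length `n` has sum in `[n - 2, n + 2]`.

If `m ≠ 2ℓ`, a factor's sum `ℓ a + m b` determines its counts `(a, b)` of `ℓ` and `m`, because
`ℓ (a - a') = m (b' - b)` with `|a - a'|, |b - b'| ≤ 2` and `ℓ < m` forces `m = 2ℓ` unless both
differences vanish; so additive and abelian equivalence of factors coincide.

If `m = 2ℓ`, the word is `ℓ · t3`. For `n ≥ 2` every value in `[n - 2, n + 2]` is a factor sum:
write `n = 3d + r' - r` with `d ≥ 1` and `r, r' ∈ {1, 2}`; the factor starting at `3k + r` then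
has sum `n` plus the difference of the prefix excesses at `3(k + d) + r'` and `3k + r`, which
depend only on `t3 (k + d)` and `t3 k`, and these two values can be prescribed freely.
-/

open Finset

lemma blockSum_add (x : ℕ → ℕ) (i n n' : ℕ) :
    blockSum x i (n + n') = blockSum x i n + blockSum x (i + n) n' := by
  simp [blockSum, sum_range_add, add_assoc]

lemma blockSum_zero_add (x : ℕ → ℕ) (i n : ℕ) :
    blockSum x 0 (i + n) = blockSum x 0 i + blockSum x i n := by
  simpa using blockSum_add x 0 i n

lemma blockSum_const_mul (c : ℕ) (x : ℕ → ℕ) (i n : ℕ) :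
    blockSum (fun j => c * x j) i n = c * blockSum x i n :=
  (mul_sum ..).symm

lemma parikh_eq_blockSum (x : ℕ → ℕ) (i n a : ℕ) :
    parikh x i n a = blockSum (fun j => if x j = a then 1 else 0) i n :=
  card_filter _ _

def factorMultiset (x : ℕ → ℕ) (i n : ℕ) : Multiset ℕ :=
  (Multiset.range n).map fun j => x (i + j)

lemma parikh_eq_count (x : ℕ → ℕ) (i n a : ℕ) :
    parikh x i n a = (factorMultiset x i n).count a := by
  simp only [parikh, eq_comm, factorMultiset, Multiset.count_map]
  rfl

lemma parikh_eq_parikh_iff {x : ℕ → ℕ} {i i' n : ℕ} :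
    parikh x i n = parikh x i' n ↔ factorMultiset x i n = factorMultiset x i' n := by
  simp only [funext_iff, parikh_eq_count, Multiset.ext]

lemma blockSum_eq_of_parikh_eq {x : ℕ → ℕ} {i i' n : ℕ} (h : parikh x i n = parikh x i' n) :
    blockSum x i n = blockSum x i' n :=
  congrArg Multiset.sum (parikh_eq_parikh_iff.1 h)

lemma parikh_comp_eq_of_parikh_eq (v : ℕ → ℕ) {x : ℕ → ℕ} {i i' n : ℕ}
    (h : parikh x i n = parikh x i' n) :
    parikh (fun j => v (x j)) i n = parikh (fun j => v (x j)) i' n := by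
  rw [parikh_eq_parikh_iff] at h ⊢
  simpa [factorMultiset, Multiset.map_map] using congrArg (Multiset.map v) h

lemma ncard_range_eq_of_forall_eq_iff {ι α β : Type*} {f : ι → α} {g : ι → β}
    (h : ∀ i j, f i = f j ↔ g i = g j) : (Set.range f).ncard = (Set.range g).ncard := by
  have hker : Setoid.ker f = Setoid.ker g := Setoid.ext fun i j => h i j
  rw [← Nat.card_coe_set_eq, ← Nat.card_coe_set_eq,
    ← Nat.card_congr (Setoid.quotientKerEquivRange f),
    ← Nat.card_congr (Setoid.quotientKerEquivRange g), hker]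

lemma addComplexity_const_mul {c : ℕ} (hc : c ≠ 0) (x : ℕ → ℕ) (n : ℕ) :
    addComplexity (fun j => c * x j) n = addComplexity x n :=
  ncard_range_eq_of_forall_eq_iff fun _ _ => by
    simp only [blockSum_const_mul, mul_right_inj' hc]

lemma t3_lt_three (n : ℕ) : t3 n < 3 := Nat.mod_lt _ (by norm_num)

lemma t3_of_lt_three {r : ℕ} (hr : r < 3) : t3 r = r := by
  interval_cases r <;> decide

lemma t3_three_pow_mul_add (p a : ℕ) {b : ℕ} (hb : b < 3 ^ p) :
    t3 (3 ^ p * a + b) = (t3 a + t3 b) % 3 := by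
  rcases Nat.eq_zero_or_pos a with rfl | ha
  · simp [t3]
  have hlen : (Nat.digits 3 b).length ≤ p := (Nat.digits_length_le_iff (by norm_num) b).2 hb
  have hdig := Nat.digits_append_zeroes_append_digits (k := p - (Nat.digits 3 b).length)
    (n := b) (by norm_num : 1 < 3) ha
  rw [Nat.add_sub_cancel' hlen] at hdig
  simp only [t3, add_comm (3 ^ p * a), ← hdig, List.sum_append, List.sum_replicate, smul_zero,
    add_zero]
  omega

lemma t3_three_mul_add (k : ℕ) {r : ℕ} (hr : r < 3) : t3 (3 * k + r) = (t3 k + r) % 3 := by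
  have h := t3_three_pow_mul_add 1 k (show r < 3 ^ 1 by simpa using hr)
  rwa [pow_one, t3_of_lt_three hr] at h

set_option maxRecDepth 100000 in
lemma exists_t3_eq_and_t3_succ_eq : ∀ s < 3, ∀ s' < 3, ∃ a < 81, t3 a = s ∧ t3 (a + 1) = s' := by
  decide

lemma exists_t3_eq_and_t3_add_eq {d s s' : ℕ} (hd : d ≠ 0) (hs : s < 3) (hs' : s' < 3) :
    ∃ k, t3 k = s ∧ t3 (k + d) = s' := by
  have hb : 3 ^ d - d < 3 ^ d := Nat.sub_lt (by positivity) (Nat.pos_of_ne_zero hd)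
  obtain ⟨a, -, ha, ha'⟩ :=
    exists_t3_eq_and_t3_succ_eq ((s + 3 - t3 (3 ^ d - d)) % 3) (Nat.mod_lt _ (by norm_num)) s' hs'
  -- `k + d = 3 ^ d * (a + 1)`, while `k` has low digits `3 ^ d - d` above which it reads `a`.
  refine ⟨3 ^ d * a + (3 ^ d - d), ?_, ?_⟩
  · rw [t3_three_pow_mul_add d a hb, ha]
    have := t3_lt_three (3 ^ d - d)
    omega
  · have hdlt : d < 3 ^ d := Nat.lt_pow_self (by norm_num)
    rw [show 3 ^ d * a + (3 ^ d - d) + d = 3 ^ d * (a + 1) + 0 by rw [mul_add]; omega,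
      t3_three_pow_mul_add d (a + 1) (by positivity), ha', t3_of_lt_three (by norm_num : 0 < 3)]
    omega

lemma blockSum_comp_t3_three_mul (g : ℕ → ℕ) (k : ℕ) {r : ℕ} (hr : r ≤ 3) :
    blockSum (fun j => g (t3 j)) (3 * k) r = ∑ j ∈ range r, g ((t3 k + j) % 3) :=
  sum_congr rfl fun j hj => by dsimp only; rw [t3_three_mul_add k (by simp at hj; omega)]

lemma blockSum_comp_t3_zero_three_mul (g : ℕ → ℕ) (k : ℕ) :
    blockSum (fun j => g (t3 j)) 0 (3 * k) = k * (g 0 + g 1 + g 2) := by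
  induction k with
  | zero => simp [blockSum]
  | succ k ih =>
    rw [mul_add, mul_one, blockSum_zero_add, ih, blockSum_comp_t3_three_mul g k le_rfl]
    have := t3_lt_three k
    simp only [sum_range_succ, sum_range_zero]
    interval_cases t3 k <;> simp only [Nat.reduceAdd, Nat.reduceMod] <;> ring

lemma blockSum_comp_t3_zero_three_mul_add (g : ℕ → ℕ) (k : ℕ) {r : ℕ} (hr : r ≤ 3) :
    blockSum (fun j => g (t3 j)) 0 (3 * k + r) =
      k * (g 0 + g 1 + g 2) + ∑ j ∈ range r, g ((t3 k + j) % 3) := by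
  rw [blockSum_zero_add, blockSum_comp_t3_zero_three_mul, blockSum_comp_t3_three_mul g k hr]

lemma blockSum_t3_zero_three_mul_add (k : ℕ) {r : ℕ} (hr : r ≤ 3) :
    blockSum t3 0 (3 * k + r) = 3 * k + ∑ j ∈ range r, (t3 k + j) % 3 := by
  simpa [mul_comm k] using blockSum_comp_t3_zero_three_mul_add (fun c => c) k hr

lemma exists_three_mul_add_eq (N : ℕ) : ∃ k r, r < 3 ∧ 3 * k + r = N :=
  ⟨N / 3, N % 3, Nat.mod_lt _ (by norm_num), Nat.div_add_mod N 3⟩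

lemma blockSum_t3_zero_bounds (N : ℕ) : N ≤ blockSum t3 0 N + 1 ∧ blockSum t3 0 N ≤ N + 1 := by
  obtain ⟨k, r, hr, rfl⟩ := exists_three_mul_add_eq N
  rw [blockSum_t3_zero_three_mul_add k hr.le]
  have := t3_lt_three k
  interval_cases r <;> simp only [sum_range_succ, sum_range_zero] <;> omega

lemma blockSum_t3_bounds (i n : ℕ) : n ≤ blockSum t3 i n + 2 ∧ blockSum t3 i n ≤ n + 2 := by
  have := blockSum_zero_add t3 i n
  have := blockSum_t3_zero_bounds i
  have := blockSum_t3_zero_bounds (i + n)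
  omega

lemma parikh_t3_zero_bounds {c : ℕ} (hc : c < 3) (N : ℕ) :
    N ≤ 3 * parikh t3 0 N c + 2 ∧ 3 * parikh t3 0 N c ≤ N + 2 := by
  obtain ⟨k, r, hr, rfl⟩ := exists_three_mul_add_eq N
  rw [parikh_eq_blockSum,
    blockSum_comp_t3_zero_three_mul_add (fun a => if a = c then 1 else 0) k hr.le]
  have := t3_lt_three k
  interval_cases r <;> simp only [sum_range_succ, sum_range_zero] <;> split_ifs <;> omega

lemma parikh_t3_le_add_two {c : ℕ} (hc : c < 3) (i i' n : ℕ) :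
    parikh t3 i n c ≤ parikh t3 i' n c + 2 := by
  have hsplit : ∀ i, parikh t3 0 (i + n) c = parikh t3 0 i c + parikh t3 i n c := fun i => by
    simp only [parikh_eq_blockSum, blockSum_zero_add]
  have := hsplit i
  have := hsplit i'
  have := parikh_t3_zero_bounds hc i
  have := parikh_t3_zero_bounds hc i'
  have := parikh_t3_zero_bounds hc (i + n)
  have := parikh_t3_zero_bounds hc (i' + n)
  omega

lemma parikh_t3_of_three_le {c : ℕ} (hc : 3 ≤ c) (i n : ℕ) : parikh t3 i n c = 0 := by
  simp only [parikh, card_eq_zero, filter_eq_empty_iff]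
  exact fun j _ => (t3_lt_three (i + j)).trans_le hc |>.ne

lemma parikh_t3_zero_add_one_add_two (i n : ℕ) :
    parikh t3 i n 0 + parikh t3 i n 1 + parikh t3 i n 2 = n := by
  simp only [parikh_eq_blockSum, blockSum, ← sum_add_distrib]
  trans ∑ _j ∈ range n, 1
  · refine sum_congr rfl fun j _ => ?_
    have := t3_lt_three (i + j)
    interval_cases t3 (i + j) <;> rfl
  · simp

lemma parikh_t3_eq_of_eq_of_eq {i i' n : ℕ} (h₁ : parikh t3 i n 1 = parikh t3 i' n 1)
    (h₂ : parikh t3 i n 2 = parikh t3 i' n 2) : parikh t3 i n = parikh t3 i' n := by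
  funext c
  rcases (by omega : c = 0 ∨ c = 1 ∨ c = 2 ∨ 3 ≤ c) with rfl | rfl | rfl | hc
  · have := parikh_t3_zero_add_one_add_two i n
    have := parikh_t3_zero_add_one_add_two i' n
    omega
  · exact h₁
  · exact h₂
  · rw [parikh_t3_of_three_le hc, parikh_t3_of_three_le hc]

lemma eq_and_eq_of_mul_add_mul_eq {l m a b a' b' : ℕ} (hl : 0 < l) (hlm : l < m)
    (hm : m ≠ 2 * l) (h : l * a + m * b = l * a' + m * b') (ha : a ≤ a' + 2) (ha' : a' ≤ a + 2)
    (hb : b ≤ b' + 2) (hb' : b' ≤ b + 2) : a = a' ∧ b = b' := by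
  obtain ⟨x, hx⟩ : ∃ x : ℤ, x = a - a' := ⟨_, rfl⟩
  obtain ⟨y, hy⟩ : ∃ y : ℤ, y = b' - b := ⟨_, rfl⟩
  have hxy : (l : ℤ) * x = m * y := by subst hx hy; linarith
  have hx₀ : -2 ≤ x := by omega
  have hx₁ : x ≤ 2 := by omega
  have hy₀ : -2 ≤ y := by omega
  have hy₁ : y ≤ 2 := by omega
  have : x = 0 ∧ y = 0 := by
    clear hx hy
    interval_cases x <;> interval_cases y <;> omega
  omega

lemma blockSum_tlm (l m i n : ℕ) :
    blockSum (tlm l m) i n = l * parikh t3 i n 1 + m * parikh t3 i n 2 := by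
  simp only [parikh_eq_blockSum, blockSum, mul_sum, ← sum_add_distrib]
  refine sum_congr rfl fun j _ => ?_
  have := t3_lt_three (i + j)
  simp only [tlm]
  interval_cases t3 (i + j) <;> simp

lemma parikh_t3_eq_of_blockSum_tlm_eq {l m i i' n : ℕ} (hl : 0 < l) (hlm : l < m)
    (hm : m ≠ 2 * l) (h : blockSum (tlm l m) i n = blockSum (tlm l m) i' n) :
    parikh t3 i n = parikh t3 i' n := by
  rw [blockSum_tlm, blockSum_tlm] at h
  obtain ⟨h₁, h₂⟩ := eq_and_eq_of_mul_add_mul_eq hl hlm hm h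
    (parikh_t3_le_add_two (by norm_num) i i' n) (parikh_t3_le_add_two (by norm_num) i' i n)
    (parikh_t3_le_add_two (by norm_num) i i' n) (parikh_t3_le_add_two (by norm_num) i' i n)
  exact parikh_t3_eq_of_eq_of_eq h₁ h₂

lemma addComplexity_tlm_eq_abComplexity {l m : ℕ} (hl : 0 < l) (hlm : l < m) (hm : m ≠ 2 * l)
    (n : ℕ) : addComplexity (tlm l m) n = abComplexity (tlm l m) n :=
  ncard_range_eq_of_forall_eq_iff fun _ _ =>
    ⟨fun h => parikh_comp_eq_of_parikh_eq (fun c => if c = 0 then 0 else if c = 1 then l else m)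
      (parikh_t3_eq_of_blockSum_tlm_eq hl hlm hm h), blockSum_eq_of_parikh_eq⟩

/-- By `blockSum_t3_zero_three_mul_add`, this says that for `r = 1, 2` the excess
`blockSum t3 0 (3 * k + r) - (3 * k + r)` takes each value `-1, 0, 1` as `t3 k` ranges over
`0, 1, 2`. -/
lemma exists_prefix_offset {r e : ℕ} (hr₁ : 1 ≤ r) (hr₂ : r ≤ 2) (he : e ≤ 2) :
    ∃ s < 3, ∑ j ∈ range r, (s + j) % 3 + 1 = r + e := by
  interval_cases r <;> interval_cases e <;> decide

lemma exists_blockSum_t3_eq {n q : ℕ} (hn : 2 ≤ n) (hq : n ≤ q + 2) (hq' : q ≤ n + 2) :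
    ∃ i, blockSum t3 i n = q := by
  obtain ⟨d, r, r', hd, ⟨hr₁, hr₂⟩, ⟨hr₁', hr₂'⟩, hnr⟩ : ∃ d r r', d ≠ 0 ∧ (1 ≤ r ∧ r ≤ 2) ∧
      (1 ≤ r' ∧ r' ≤ 2) ∧ n + r = 3 * d + r' := by
    rcases (by omega : n % 3 = 0 ∨ n % 3 = 1 ∨ n % 3 = 2) with h | h | h
    exacts [⟨n / 3, 1, 1, by omega⟩, ⟨n / 3, 1, 2, by omega⟩, ⟨n / 3 + 1, 2, 1, by omega⟩]
  obtain ⟨e, e', he, he', hqe⟩ : ∃ e e', e ≤ 2 ∧ e' ≤ 2 ∧ q + e = n + e' := by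
    rcases le_total q n with h | h
    exacts [⟨n - q, 0, by omega⟩, ⟨0, q - n, by omega⟩]
  obtain ⟨s, hs, hse⟩ := exists_prefix_offset hr₁ hr₂ he
  obtain ⟨s', hs', hse'⟩ := exists_prefix_offset hr₁' hr₂' he'
  obtain ⟨k, rfl, hk⟩ := exists_t3_eq_and_t3_add_eq hd hs hs'
  refine ⟨3 * k + r, ?_⟩
  have hsplit := blockSum_zero_add t3 (3 * k + r) n
  rw [show 3 * k + r + n = 3 * (k + d) + r' by omega, blockSum_t3_zero_three_mul_add _ (by omega),
    blockSum_t3_zero_three_mul_add _ (by omega), hk] at hsplit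
  omega

lemma range_blockSum_t3_of_two_le {n : ℕ} (hn : 2 ≤ n) :
    Set.range (fun i => blockSum t3 i n) = Set.Icc (n - 2) (n + 2) := by
  ext q
  refine ⟨?_, fun ⟨hq, hq'⟩ => exists_blockSum_t3_eq hn (by omega) hq'⟩
  rintro ⟨i, rfl⟩
  have := blockSum_t3_bounds i n
  exact ⟨by dsimp only; omega, by dsimp only; omega⟩

lemma addComplexity_t3_zero : addComplexity t3 0 = 1 := by
  simp [addComplexity, blockSum]

lemma addComplexity_t3_one : addComplexity t3 1 = 3 := by
  have : Set.range (fun i => blockSum t3 i 1) = Set.Iio 3 := by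
    ext s
    simp only [blockSum, sum_range_one, add_zero, Set.mem_range, Set.mem_Iio]
    exact ⟨fun ⟨i, hi⟩ => hi ▸ t3_lt_three i, fun hs => ⟨s, t3_of_lt_three hs⟩⟩
  show (Set.range fun i => blockSum t3 i 1).ncard = 3
  rw [this, ← coe_range, Set.ncard_coe_finset, card_range]

lemma addComplexity_t3_of_two_le {n : ℕ} (hn : 2 ≤ n) : addComplexity t3 n = 5 := by
  show (Set.range fun i => blockSum t3 i n).ncard = 5
  rw [range_blockSum_t3_of_two_le hn, ← coe_Icc, Set.ncard_coe_finset, Nat.card_Icc]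
  omega

lemma tlm_two_mul (l : ℕ) : tlm l (2 * l) = fun j => l * t3 j := by
  funext j
  have := t3_lt_three j
  simp only [tlm]
  interval_cases t3 j <;> simp [mul_comm]

/-- If m ≠ 2ℓ then the additive complexity of the (ℓ,m)-Thue–Morse word equals its
abelian complexity; if m = 2ℓ then its additive complexity is 1 3 5 5 5 ⋯. -/
theorem lm_thue_morse_additive_complexity (l m : ℕ) (hl : 1 ≤ l) (hlm : l < m) :
    (m ≠ 2 * l → ∀ n, addComplexity (tlm l m) n = abComplexity (tlm l m) n) ∧
    (m = 2 * l →
      addComplexity (tlm l m) 0 = 1 ∧ addComplexity (tlm l m) 1 = 3 ∧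
      ∀ n, 2 ≤ n → addComplexity (tlm l m) n = 5) := by
  refine ⟨addComplexity_tlm_eq_abComplexity hl hlm, ?_⟩
  rintro rfl
  simp only [tlm_two_mul, addComplexity_const_mul (by omega : l ≠ 0)]
  exact ⟨addComplexity_t3_zero, addComplexity_t3_one, fun n => addComplexity_t3_of_two_le⟩
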